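/- arXiv:2104.10976 — 2 statements merged into one kernel-verified Lean document; each statement's English description precedes it below -/
import Mathlib

section
/- Let f_k(r) = r^k e^{-r}/k! and let E ⊆ [0,∞) be a measurable set of finite measure |E|. Then for every k ≥ 0, ∫_E f_k(r) dr ≤ ∫_0^{|E|} e^{-r} dr = 1 − e^{−|E|}. -/
open MeasureTheory

/-- The gamma density `f_k(r) = r^k e^{-r}/k!`. -/
noncomputable def gammaDens (k : ℕ) (r : ℝ) : ℝ := r ^ k * Real.exp (-r) / (Nat.factorial k)

/-!
For `k = 0` this is the bathtub principle: `e^{-r}` is decreasing, so among subsets of `[0, ∞)`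
of a given measure `m` the integral is largest on `[0, m)`. For `k ≥ 1`,
`f_k = f_{k-1} * e^{-r}` is a convolution with the exponential density. By Tonelli,
`∫_E f_k = ∫ f_{k-1}(t) ∫_{E ∩ [t, ∞)} e^{-(r - t)} dr dt`, and the bathtub principle
on `[t, ∞)` bounds the inner integral by `1 - e^{-|E|}`; since `∫ f_{k-1} = 1` the claim
follows.
-/

open Set Real ProbabilityTheory
open scoped ENNReal

lemma setLIntegral_le_setLIntegral_Ico_of_antitoneOn {f : ℝ → ℝ≥0∞} {a : ℝ}
    (hf : AntitoneOn f (Ici a)) {F : Set ℝ} (hF : MeasurableSet F) (hFa : F ⊆ Ici a)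
    (hF_fin : volume F ≠ ∞) :
    ∫⁻ u in F, f u ≤ ∫⁻ u in Ico a (a + (volume F).toReal), f u := by
  set b := a + (volume F).toReal
  set M := Ico a b
  have hab : a ≤ b := le_add_of_nonneg_right ENNReal.toReal_nonneg
  have hM : MeasurableSet M := measurableSet_Ico
  have h_vol : volume (F \ M) = volume (M \ F) :=
    measure_sdiff_symm hF.nullMeasurableSet hM.nullMeasurableSet
      (by simp [M, b, ENNReal.ofReal_toReal hF_fin])
      (measure_ne_top_of_subset inter_subset_left hF_fin)
  -- Points of `F` beyond `M` lie to the right of `b`, points of `M` missing from `F` to its left.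
  have h_out : ∫⁻ u in F \ M, f u ≤ f b * volume (F \ M) := by
    calc ∫⁻ u in F \ M, f u ≤ ∫⁻ _ in F \ M, f b :=
          setLIntegral_mono' (hF.diff hM) fun u hu =>
            hf hab (hFa hu.1) (not_lt.1 fun hub => hu.2 ⟨hFa hu.1, hub⟩)
      _ = f b * volume (F \ M) := setLIntegral_const _ _
  have h_in : f b * volume (M \ F) ≤ ∫⁻ u in M \ F, f u := by
    calc f b * volume (M \ F) = ∫⁻ _ in M \ F, f b := (setLIntegral_const _ _).symm
      _ ≤ ∫⁻ u in M \ F, f u :=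
          setLIntegral_mono' (hM.diff hF) fun u hu => hf hu.1.1 hab hu.1.2.le
  calc ∫⁻ u in F, f u = (∫⁻ u in F ∩ M, f u) + ∫⁻ u in F \ M, f u :=
        (lintegral_inter_add_sdiff _ _ hM).symm
    _ ≤ (∫⁻ u in M ∩ F, f u) + ∫⁻ u in M \ F, f u := by
        rw [inter_comm]
        exact add_le_add le_rfl (h_out.trans (h_vol ▸ h_in))
    _ = ∫⁻ u in M, f u := lintegral_inter_add_sdiff _ _ hF

lemma integral_exp_neg_of_zero (m : ℝ) : ∫ u in (0 : ℝ)..m, exp (-u) = 1 - exp (-m) := by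
  rw [intervalIntegral.integral_comp_neg (fun x => exp x), integral_exp]
  simp

lemma lintegral_Ico_exp_neg_sub (t : ℝ) {m : ℝ} (hm : 0 ≤ m) :
    ∫⁻ r in Ico t (t + m), ENNReal.ofReal (exp (-(r - t))) = ENNReal.ofReal (1 - exp (-m)) := by
  rw [setLIntegral_congr Ico_ae_eq_Ioc, ← ofReal_integral_eq_lintegral_ofReal
      (by fun_prop : Continuous fun r => exp (-(r - t))).integrableOn_Ioc
      (ae_of_all _ fun _ => (exp_pos _).le),
    ← intervalIntegral.integral_of_le (by linarith),
    intervalIntegral.integral_comp_sub_right (fun x => exp (-x)), sub_self, add_sub_cancel_left,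
    integral_exp_neg_of_zero]

lemma lintegral_inter_Ici_exp_neg_sub_le (t : ℝ) {E : Set ℝ} (hE : MeasurableSet E)
    (hE_fin : volume E ≠ ∞) :
    ∫⁻ r in E ∩ Ici t, ENNReal.ofReal (exp (-(r - t))) ≤
      ENNReal.ofReal (1 - exp (-(volume E).toReal)) := by
  have h_anti : AntitoneOn (fun r => ENNReal.ofReal (exp (-(r - t)))) (Ici t) :=
    fun x _ y _ hxy => ENNReal.ofReal_le_ofReal (exp_le_exp.2 (by linarith))
  calc ∫⁻ r in E ∩ Ici t, ENNReal.ofReal (exp (-(r - t)))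
      ≤ ∫⁻ r in Ico t (t + (volume (E ∩ Ici t)).toReal), ENNReal.ofReal (exp (-(r - t))) :=
        setLIntegral_le_setLIntegral_Ico_of_antitoneOn h_anti (hE.inter measurableSet_Ici)
          inter_subset_right (measure_ne_top_of_subset inter_subset_left hE_fin)
    _ = ENNReal.ofReal (1 - exp (-(volume (E ∩ Ici t)).toReal)) :=
        lintegral_Ico_exp_neg_sub t ENNReal.toReal_nonneg
    _ ≤ ENNReal.ofReal (1 - exp (-(volume E).toReal)) := by
        gcongr
        exact inter_subset_left

lemma lintegral_lintegral_Iic_mul_exp_neg_sub_le {g : ℝ → ℝ≥0∞} (hg : Measurable g)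
    {E : Set ℝ} (hE : MeasurableSet E) (hE_fin : volume E ≠ ∞) :
    ∫⁻ r in E, ∫⁻ t in Iic r, g t * ENNReal.ofReal (exp (-(r - t))) ≤
      (∫⁻ t, g t) * ENNReal.ofReal (1 - exp (-(volume E).toReal)) := by
  set c := ENNReal.ofReal (1 - exp (-(volume E).toReal))
  set K : ℝ × ℝ → ℝ≥0∞ :=
    {p | p.1 ≤ p.2}.indicator fun p => g p.1 * ENNReal.ofReal (exp (-(p.2 - p.1)))
  have hK : Measurable K :=
    ((hg.comp measurable_fst).mul (by fun_prop)).indicator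
      (measurableSet_le measurable_fst measurable_snd)
  have h_inner (r : ℝ) :
      ∫⁻ t in Iic r, g t * ENNReal.ofReal (exp (-(r - t))) = ∫⁻ t, K (t, r) := by
    rw [← lintegral_indicator measurableSet_Iic]
    rfl
  have h_outer (t : ℝ) : ∫⁻ r in E, K (t, r) ≤ g t * c := by
    have h_slice : (fun r => K (t, r)) =
        fun r => g t * (Ici t).indicator (fun r => ENNReal.ofReal (exp (-(r - t)))) r := by
      ext r
      by_cases htr : t ≤ r <;> simp [K, htr]
    rw [h_slice, lintegral_const_mul _ ((by fun_prop : Measurable fun r => ENNReal.ofReal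
        (exp (-(r - t)))).indicator measurableSet_Ici), lintegral_indicator measurableSet_Ici,
      Measure.restrict_restrict measurableSet_Ici, inter_comm]
    gcongr
    exact lintegral_inter_Ici_exp_neg_sub_le t hE hE_fin
  calc ∫⁻ r in E, ∫⁻ t in Iic r, g t * ENNReal.ofReal (exp (-(r - t)))
      = ∫⁻ r in E, ∫⁻ t, K (t, r) := by simp_rw [h_inner]
    _ = ∫⁻ t, ∫⁻ r in E, K (t, r) :=
        lintegral_lintegral_swap (hK.comp measurable_swap).aemeasurable
    _ ≤ ∫⁻ t, g t * c := lintegral_mono h_outer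
    _ = (∫⁻ t, g t) * c := lintegral_mul_const _ hg

lemma gammaDens_nonneg (k : ℕ) {r : ℝ} (hr : 0 ≤ r) : 0 ≤ gammaDens k r := by
  unfold gammaDens
  positivity

lemma continuous_gammaDens (k : ℕ) : Continuous (gammaDens k) := by
  unfold gammaDens
  fun_prop

lemma integral_gammaDens_mul_exp_neg_sub (k : ℕ) (r : ℝ) :
    ∫ t in (0 : ℝ)..r, gammaDens k t * exp (-(r - t)) = gammaDens (k + 1) r := by
  have h_factor (t : ℝ) : gammaDens k t * exp (-(r - t)) = t ^ k * (exp (-r) / k.factorial) := by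
    rw [gammaDens, div_mul_eq_mul_div, mul_assoc, ← exp_add]
    ring_nf
  simp_rw [h_factor]
  rw [intervalIntegral.integral_mul_const, integral_pow, gammaDens, Nat.factorial_succ]
  push_cast
  field_simp
  ring

lemma gammaPDF_natCast_add_one_one (k : ℕ) :
    gammaPDF (k + 1) 1 = (Ici 0).indicator fun t => ENNReal.ofReal (gammaDens k t) := by
  ext t
  by_cases ht : 0 ≤ t
  · rw [gammaPDF_of_nonneg ht, indicator_of_mem (mem_Ici.2 ht), add_sub_cancel_right,
      Real.rpow_natCast, Gamma_nat_eq_factorial, one_rpow, one_mul, gammaDens]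
    congr 1
    ring
  · rw [gammaPDF_of_neg (not_le.1 ht), indicator_of_notMem (fun h => ht (mem_Ici.1 h))]

lemma lintegral_Iic_gammaPDF_mul_exp_neg_sub (k : ℕ) {r : ℝ} (hr : 0 ≤ r) :
    ∫⁻ t in Iic r, gammaPDF (k + 1) 1 t * ENNReal.ofReal (exp (-(r - t))) =
      ENNReal.ofReal (gammaDens (k + 1) r) := by
  have h_ind : (fun t => gammaPDF (k + 1) 1 t * ENNReal.ofReal (exp (-(r - t)))) =
      (Ici 0).indicator fun t => ENNReal.ofReal (gammaDens k t) * ENNReal.ofReal (exp (-(r - t))) :=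
    funext fun t => by rw [gammaPDF_natCast_add_one_one, indicator_mul_left]
  rw [h_ind, lintegral_indicator measurableSet_Ici, Measure.restrict_restrict measurableSet_Ici,
    Ici_inter_Iic, setLIntegral_congr Ioc_ae_eq_Icc.symm,
    ← integral_gammaDens_mul_exp_neg_sub, intervalIntegral.integral_of_le hr,
    ofReal_integral_eq_lintegral_ofReal]
  · refine setLIntegral_congr_fun measurableSet_Ioc fun t ht => ?_
    rw [ENNReal.ofReal_mul (gammaDens_nonneg k ht.1.le)]
  · exact ((continuous_gammaDens k).mul (by fun_prop)).integrableOn_Ioc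
  · exact ae_restrict_of_forall_mem measurableSet_Ioc fun t ht =>
      mul_nonneg (gammaDens_nonneg k ht.1.le) (exp_pos _).le

lemma lintegral_gammaDens_le (k : ℕ) {E : Set ℝ} (hE : MeasurableSet E) (hE0 : E ⊆ Ici 0)
    (hE_fin : volume E ≠ ∞) :
    ∫⁻ r in E, ENNReal.ofReal (gammaDens k r) ≤
      ENNReal.ofReal (1 - exp (-(volume E).toReal)) := by
  cases k with
  | zero =>
    have h := lintegral_inter_Ici_exp_neg_sub_le 0 hE hE_fin
    rw [inter_eq_left.2 hE0] at h
    simpa [gammaDens] using h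
  | succ k =>
    rw [← setLIntegral_congr_fun hE fun r hr =>
      lintegral_Iic_gammaPDF_mul_exp_neg_sub k (hE0 hr)]
    have h := lintegral_lintegral_Iic_mul_exp_neg_sub_le (g := gammaPDF (k + 1) 1)
      (measurable_gammaPDFReal _ _).ennreal_ofReal hE hE_fin
    rwa [lintegral_gammaPDF_eq_one k.cast_add_one_pos one_pos, one_mul] at h

theorem stmt_7 (k : ℕ) (E : Set ℝ) (hE : MeasurableSet E) (hE0 : E ⊆ Set.Ici 0)
    (hfin : volume E < ⊤) :
    (∫ r in E, gammaDens k r) ≤ 1 - Real.exp (-(volume E).toReal) ∧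
    (∫ r in (0:ℝ)..(volume E).toReal, Real.exp (-r)) = 1 - Real.exp (-(volume E).toReal) := by
  refine ⟨?_, integral_exp_neg_of_zero _⟩
  rw [integral_eq_lintegral_of_nonneg_ae
    (ae_restrict_of_forall_mem hE fun r hr => gammaDens_nonneg k (hE0 hr))
    (continuous_gammaDens k).aestronglyMeasurable]
  exact ENNReal.toReal_le_of_le_ofReal
    (sub_nonneg.2 (exp_le_one_iff.2 (neg_nonpos.2 ENNReal.toReal_nonneg)))
    (lintegral_gammaDens_le k hE hE0 hfin.ne)
end

section
/- Let f_k(r) = r^k e^{-r}/k!, fix a > 1 and T > 0, and set t = θT for a fixed θ ∈ (0,1). Then the limit as k → ∞ of (∫_{ak}^{ak+t} f_k(r) dr)/(∫_{ak}^{ak+T} f_k(r) dr) equals (1 − e^{−t(1−1/a)})/(1 − e^{−T(1−1/a)}). -/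
/-!
Substituting `r = a k + u` gives
`∫_{ak}^{ak+s} f_k = f_k(ak) · ∫_0^s (1 + u/(ak))^k e^{-u} du`,
so the prefactor `f_k(ak)` cancels in the ratio. Pointwise `(1 + u/(ak))^k → e^{u/a}`, and the
bound `(1 + x/n)^n ≤ e^x` lets dominated convergence turn each remaining integral into
`∫_0^s e^{-(1-1/a)u} du = (1 - e^{-(1-1/a)s})/(1 - 1/a)`.
-/

open MeasureTheory Filter

open Real Topology

theorem gammaDens_pos (k : ℕ) {r : ℝ} (hr : 0 < r) : 0 < gammaDens k r := by
  unfold gammaDens; positivity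

theorem integral_gammaDens_eq_mul (k : ℕ) {x : ℝ} (hx : x ≠ 0) (s : ℝ) :
    ∫ r in x..x + s, gammaDens k r =
      gammaDens k x * ∫ u in 0..s, (1 + u / x) ^ k * exp (-u) := by
  have hshift := intervalIntegral.integral_comp_add_left (gammaDens k) x (a := 0) (b := s)
  rw [add_zero] at hshift
  rw [← hshift, ← intervalIntegral.integral_const_mul]
  refine intervalIntegral.integral_congr fun u _ => ?_
  have hxu : x + u = x * (1 + u / x) := by field_simp
  simp only [gammaDens]
  rw [neg_add, exp_add, hxu, mul_pow]
  ring

theorem abs_one_add_div_pow_le_exp {n : ℕ} {x : ℝ} (hx : -x ≤ n) :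
    |(1 + x / n) ^ n| ≤ exp x := by
  have h := one_sub_div_pow_le_exp_neg hx
  rw [neg_neg, sub_eq_add_neg, ← neg_div, neg_neg] at h
  rcases n.eq_zero_or_pos with rfl | hn
  · simpa using h
  · have : 0 ≤ 1 + x / n := by
      have : (0 : ℝ) < n := by positivity
      field_simp
      linarith
    rwa [abs_of_nonneg (pow_nonneg this n)]

theorem integral_exp_mul_from_zero {b : ℝ} (hb : b ≠ 0) (s : ℝ) :
    ∫ u in 0..s, exp (b * u) = (exp (b * s) - 1) / b := by
  rw [intervalIntegral.integral_comp_mul_left (fun u => exp u) hb, integral_exp, mul_zero, exp_zero,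
    smul_eq_mul, inv_mul_eq_div]

theorem tendsto_integral_one_add_div_mul_pow_mul_exp_neg {a : ℝ} (ha : a ≠ 0) (s : ℝ) :
    Tendsto (fun k : ℕ => ∫ u in 0..s, (1 + u / (a * k)) ^ k * exp (-u)) atTop
      (𝓝 (∫ u in 0..s, exp ((a⁻¹ - 1) * u))) := by
  refine intervalIntegral.tendsto_integral_filter_of_dominated_convergence
    (fun u => exp ((a⁻¹ - 1) * u)) (.of_forall fun k => by fun_prop) ?_
    (Continuous.intervalIntegrable (by fun_prop) _ _) ?_
  · filter_upwards [eventually_ge_atTop ⌈|s / a|⌉₊] with k hk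
    refine .of_forall fun u hu => ?_
    have hus : |u| ≤ |s| := by simpa using Set.abs_sub_left_of_mem_uIcc (Set.uIoc_subset_uIcc hu)
    have hk' : -(u / a) ≤ k := calc
      -(u / a) ≤ |u / a| := neg_le_abs _
      _ ≤ |s / a| := by rw [abs_div, abs_div]; gcongr
      _ ≤ ⌈|s / a|⌉₊ := Nat.le_ceil _
      _ ≤ k := by exact_mod_cast hk
    rw [norm_mul, norm_eq_abs, norm_eq_abs, abs_exp, ← div_div]
    calc |(1 + u / a / k) ^ k| * exp (-u) ≤ exp (u / a) * exp (-u) := by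
          gcongr; exact abs_one_add_div_pow_le_exp hk'
      _ = exp ((a⁻¹ - 1) * u) := by rw [← exp_add]; ring_nf
  · refine .of_forall fun u _ => ?_
    have h := (tendsto_one_add_div_pow_exp (u / a)).mul_const (exp (-u))
    simp only [div_div, ← exp_add] at h
    convert h using 2
    congr 1
    ring

theorem stmt_10_general (a T : ℝ) (ha : 1 < a) (hT : 0 < T)
    (t : ℝ) :
    Tendsto (fun k : ℕ =>
        (∫ r in (a * k)..(a * k + t), gammaDens k r) /
          (∫ r in (a * k)..(a * k + T), gammaDens k r))
      atTop
      (nhds ((1 - Real.exp (-t * (1 - 1 / a))) / (1 - Real.exp (-T * (1 - 1 / a))))) := by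
  have ha0 : a ≠ 0 := by positivity
  have hb : a⁻¹ - 1 < 0 := by linarith [inv_lt_one_of_one_lt₀ ha]
  have hden : (exp ((a⁻¹ - 1) * T) - 1) / (a⁻¹ - 1) ≠ 0 :=
    div_ne_zero (by linarith [exp_lt_one_iff.2 (mul_neg_of_neg_of_pos hb hT)]) hb.ne
  have hlim := (tendsto_integral_one_add_div_mul_pow_mul_exp_neg ha0 t).div
    (tendsto_integral_one_add_div_mul_pow_mul_exp_neg ha0 T)
    (by rwa [integral_exp_mul_from_zero hb.ne])
  rw [integral_exp_mul_from_zero hb.ne, integral_exp_mul_from_zero hb.ne,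
    div_div_div_cancel_right₀ hb.ne] at hlim
  have hval : (1 - exp (-t * (1 - 1 / a))) / (1 - exp (-T * (1 - 1 / a))) =
      (exp ((a⁻¹ - 1) * t) - 1) / (exp ((a⁻¹ - 1) * T) - 1) := by
    rw [← neg_div_neg_eq]; ring_nf
  rw [hval]
  refine hlim.congr' ?_
  filter_upwards [eventually_gt_atTop 0] with k hk
  have hak : 0 < a * k := by positivity
  rw [integral_gammaDens_eq_mul k hak.ne', integral_gammaDens_eq_mul k hak.ne',
    mul_div_mul_left _ _ (gammaDens_pos k hak).ne']
  rfl

theorem stmt_10 (a T θ : ℝ) (ha : 1 < a) (hT : 0 < T) (hθ0 : 0 < θ) (hθ1 : θ < 1)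
    (t : ℝ) (ht : t = θ * T) :
    Tendsto (fun k : ℕ =>
        (∫ r in (a * k)..(a * k + t), gammaDens k r) /
          (∫ r in (a * k)..(a * k + T), gammaDens k r))
      atTop
      (nhds ((1 - Real.exp (-t * (1 - 1 / a))) / (1 - Real.exp (-T * (1 - 1 / a))))) :=
  stmt_10_general a T ha hT t
end
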